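/- Let α > −1 be real and n ≥ 1 an integer, and let x_{n,1}(α) and x_{n,n}(α) denote respectively the largest and smallest zero of the generalized Laguerre polynomial L_n^{(α)}. Then x_{n,1}(α) − x_{n,n}(α) < 4√(n(n + α + 1)). -/

import Mathlib

/-!
The zeros are located through the three-term recurrence
`(k + 2) L_{k+2}(x) = (2k + α + 3 - x) L_{k+1}(x) - (k + 1 + α) L_k(x)`.
Write `w_k = √(k (k + α))`. If a positive sequence obeys such a recurrence whose middle
coefficient `c_k` dominates `w_{k+1} + w_{k+2}`, then `w_{k+1} p_k ≤ (k + 1) p_{k+1}` propagates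
along the recurrence, and the sequence stays positive. For `x ≥ B = 2n + α - 1 + w_{n-1} + w_n`
this applies to `(-1)^k L_k(x)`, and for `x ≤ B - 4√(n (n + α + 1))` to `L_k(x)`, because
`(n - k) + w_k ≤ √(n (n + α + 1))`. So `L_n` has no zero outside
`(B - 4√(n (n + α + 1)), B)`.
-/

/-- The generalized Laguerre polynomial `L_n^{(α)}`, as a function on `ℝ`, defined by
`L_n^{(α)}(x) = ∑_{i=0}^{n} (−1)^i · (∏_{j=i+1}^{n} (α + j)) / ((n − i)! · i!) · x^i`. -/
noncomputable def laguerre (n : ℕ) (α : ℝ) : ℝ → ℝ := fun x =>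
  ∑ i ∈ Finset.range (n + 1),
    (-1 : ℝ) ^ i * (∏ j ∈ Finset.Icc (i + 1) n, (α + (j : ℝ))) /
      (((n - i).factorial : ℝ) * ((i.factorial : ℝ))) * x ^ i

open Finset

noncomputable def laguerreCoeff (n : ℕ) (α : ℝ) (i : ℕ) : ℝ :=
  (-1 : ℝ) ^ i * (∏ j ∈ Icc (i + 1) n, (α + (j : ℝ))) /
    (((n - i).factorial : ℝ) * ((i.factorial : ℝ)))

lemma laguerre_eq_sum (n : ℕ) (α x : ℝ) :
    laguerre n α x = ∑ i ∈ range (n + 1), laguerreCoeff n α i * x ^ i := rfl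

lemma laguerreCoeff_self (n : ℕ) (α : ℝ) :
    laguerreCoeff n α n = (-1) ^ n / n.factorial := by
  simp [laguerreCoeff]

lemma succ_mul_laguerreCoeff_degree_succ (i m : ℕ) (α : ℝ) :
    (m + 1 : ℝ) * laguerreCoeff (i + m + 1) α i
      = (α + (i + m + 1 : ℕ)) * laguerreCoeff (i + m) α i := by
  have hm1 : i + m + 1 - i = m + 1 := by omega
  have hm : i + m - i = m := by omega
  simp only [laguerreCoeff, hm1, hm, prod_Icc_succ_top (by omega : i + 1 ≤ i + m + 1),
    Nat.factorial_succ]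
  push_cast
  field_simp

lemma mul_laguerreCoeff_index_succ (i m : ℕ) (α : ℝ) :
    ((i + 1) * (α + (i + 1 : ℕ)) : ℝ) * laguerreCoeff (i + 1 + m) α (i + 1)
      = -(m + 1) * laguerreCoeff (i + 1 + m) α i := by
  have hm1 : i + 1 + m - i = m + 1 := by omega
  have hm : i + 1 + m - (i + 1) = m := by omega
  simp only [laguerreCoeff, hm1, hm,
    ← insert_Icc_add_one_left_eq_Icc (by omega : i + 1 ≤ i + 1 + m),
    prod_insert (by simp : i + 1 ∉ Icc (i + 1 + 1) (i + 1 + m)), Nat.factorial_succ, pow_succ]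
  push_cast
  field_simp

/- The coefficients of `x ^ 0`, `x ^ (i + 1)` (for `k = i + 1 + d`), `x ^ (k + 1)` and
`x ^ (k + 2)` in `laguerre_add_two`. -/

lemma laguerreCoeff_recurrence_zero (k : ℕ) (α : ℝ) :
    (k + 2 : ℝ) * laguerreCoeff (k + 2) α 0
      = (2 * k + α + 3) * laguerreCoeff (k + 1) α 0 - (k + 1 + α) * laguerreCoeff k α 0 := by
  have h₁ := succ_mul_laguerreCoeff_degree_succ 0 (k + 1) α
  have h₀ := succ_mul_laguerreCoeff_degree_succ 0 k α
  simp only [zero_add] at h₁ h₀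
  push_cast at h₁ h₀
  linear_combination h₁ - h₀

lemma laguerreCoeff_recurrence_succ (i d : ℕ) (α : ℝ) :
    ((i + 1 + d : ℕ) + 2 : ℝ) * laguerreCoeff (i + 1 + d + 2) α (i + 1)
      = (2 * (i + 1 + d : ℕ) + α + 3) * laguerreCoeff (i + 1 + d + 1) α (i + 1)
        - laguerreCoeff (i + 1 + d + 1) α i
        - ((i + 1 + d : ℕ) + 1 + α) * laguerreCoeff (i + 1 + d) α (i + 1) := by
  have h₂ := succ_mul_laguerreCoeff_degree_succ (i + 1) (d + 1) α
  have h₁ := succ_mul_laguerreCoeff_degree_succ (i + 1) d α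
  have hr := mul_laguerreCoeff_index_succ i (d + 1) α
  simp only [← add_assoc] at h₂ h₁ hr
  push_cast at h₂ h₁ hr ⊢
  apply mul_left_cancel₀ (by positivity : (d + 2 : ℝ) ≠ 0)
  linear_combination (↑i + 1 + ↑d + 2) * h₂ - (d + 2) * h₁ + hr

lemma laguerreCoeff_recurrence_top (k : ℕ) (α : ℝ) :
    (k + 2 : ℝ) * laguerreCoeff (k + 2) α (k + 1)
      = (2 * k + α + 3) * laguerreCoeff (k + 1) α (k + 1) - laguerreCoeff (k + 1) α k := by
  have h := succ_mul_laguerreCoeff_degree_succ (k + 1) 0 α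
  have hr := mul_laguerreCoeff_index_succ k 0 α
  simp only [add_zero] at h hr
  push_cast at h hr
  linear_combination (k + 2 : ℝ) * h + hr

lemma laguerreCoeff_recurrence_lead (k : ℕ) (α : ℝ) :
    (k + 2 : ℝ) * laguerreCoeff (k + 2) α (k + 2) = -laguerreCoeff (k + 1) α (k + 1) := by
  rw [laguerreCoeff_self, laguerreCoeff_self, Nat.factorial_succ (k + 1)]
  push_cast
  field_simp
  ring

theorem laguerre_add_two (k : ℕ) (α x : ℝ) :
    (k + 2 : ℝ) * laguerre (k + 2) α x
      = (2 * k + α + 3 - x) * laguerre (k + 1) α x - (k + 1 + α) * laguerre k α x := by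
  set c := laguerreCoeff
  have e₂ : laguerre (k + 2) α x
      = ∑ i ∈ range k, c (k + 2) α (i + 1) * x ^ (i + 1) + c (k + 2) α 0
        + c (k + 2) α (k + 1) * x ^ (k + 1) + c (k + 2) α (k + 2) * x ^ (k + 2) := by
    rw [laguerre_eq_sum, sum_range_succ, sum_range_succ, sum_range_succ', pow_zero, mul_one]
  have e₁ : laguerre (k + 1) α x = ∑ i ∈ range k, c (k + 1) α (i + 1) * x ^ (i + 1)
      + c (k + 1) α 0 + c (k + 1) α (k + 1) * x ^ (k + 1) := by
    rw [laguerre_eq_sum, sum_range_succ, sum_range_succ', pow_zero, mul_one]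
  have e₀ : laguerre k α x = ∑ i ∈ range k, c k α (i + 1) * x ^ (i + 1) + c k α 0 := by
    rw [laguerre_eq_sum, sum_range_succ', pow_zero, mul_one]
  have ex : x * laguerre (k + 1) α x = ∑ i ∈ range k, c (k + 1) α i * x ^ (i + 1)
      + c (k + 1) α k * x ^ (k + 1) + c (k + 1) α (k + 1) * x ^ (k + 2) := by
    rw [laguerre_eq_sum, mul_sum, sum_range_succ, sum_range_succ]
    congr 1; congr 1
    · exact sum_congr rfl fun _ _ => by ring
    · ring
    · ring
  have hmid : (k + 2 : ℝ) * ∑ i ∈ range k, c (k + 2) α (i + 1) * x ^ (i + 1)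
      = (2 * k + α + 3) * ∑ i ∈ range k, c (k + 1) α (i + 1) * x ^ (i + 1)
        - ∑ i ∈ range k, c (k + 1) α i * x ^ (i + 1)
        - (k + 1 + α) * ∑ i ∈ range k, c k α (i + 1) * x ^ (i + 1) := by
    simp only [mul_sum, ← sum_sub_distrib]
    refine sum_congr rfl fun i hi => ?_
    obtain ⟨d, rfl⟩ : ∃ d, k = i + 1 + d := ⟨k - (i + 1), by grind⟩
    linear_combination x ^ (i + 1) * laguerreCoeff_recurrence_succ i d α
  rw [sub_mul, e₂, ex, e₁, e₀]
  linear_combination hmid + laguerreCoeff_recurrence_zero k α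
    + x ^ (k + 1) * laguerreCoeff_recurrence_top k α
    + x ^ (k + 2) * laguerreCoeff_recurrence_lead k α

lemma laguerre_zero (α x : ℝ) : laguerre 0 α x = 1 := by
  simp [laguerre]

lemma laguerre_one (α x : ℝ) : laguerre 1 α x = α + 1 - x := by
  simp [laguerre, sum_range_succ, sub_eq_add_neg]

noncomputable def laguerreWeight (α : ℝ) (k : ℕ) : ℝ := Real.sqrt (k * (k + α))

section ThreeTermRecurrence

variable {α : ℝ} {p c : ℕ → ℝ} {n : ℕ}

lemma laguerreWeight_succ_pos (hα : -1 < α) (k : ℕ) : 0 < laguerreWeight α (k + 1) := by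
  unfold laguerreWeight
  push_cast
  have : (0 : ℝ) ≤ k := k.cast_nonneg
  apply Real.sqrt_pos_of_pos
  nlinarith

lemma laguerreWeight_sq (hα : -1 < α) (k : ℕ) : laguerreWeight α k ^ 2 = k * (k + α) := by
  refine Real.sq_sqrt ?_
  rcases k with _ | k
  · simp
  · have : (0 : ℝ) ≤ k := k.cast_nonneg
    push_cast
    nlinarith

lemma laguerreWeight_monotone (hα : -1 < α) : Monotone (laguerreWeight α) := by
  refine monotone_nat_of_le_succ fun k => Real.sqrt_le_sqrt ?_
  have : (0 : ℝ) ≤ k := k.cast_nonneg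
  push_cast
  nlinarith

lemma laguerreWeight_le (hα : -1 < α) (k : ℕ) : laguerreWeight α k ≤ k + (α + 1) / 2 := by
  have : (0 : ℝ) ≤ k := k.cast_nonneg
  refine Real.sqrt_le_iff.mpr ⟨by linarith, by nlinarith⟩

lemma sub_add_laguerreWeight_le (hα : -1 < α) {k : ℕ} (hk : k ≤ n) :
    (n - k : ℝ) + laguerreWeight α k ≤ Real.sqrt (n * (n + α + 1)) := by
  have hkn : (k : ℝ) ≤ n := by exact_mod_cast hk
  have hw := laguerreWeight_le hα k
  have hwsq := laguerreWeight_sq hα k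
  refine Real.le_sqrt_of_sq_le ?_
  nlinarith [mul_le_mul_of_nonneg_left hw (sub_nonneg.mpr hkn)]

lemma pos_succ_of_laguerreWeight_mul_le (hα : -1 < α) {k : ℕ} (hp : 0 < p k)
    (hk : laguerreWeight α (k + 1) * p k ≤ (k + 1) * p (k + 1)) : 0 < p (k + 1) := by
  have : (0 : ℝ) < k + 1 := by positivity
  nlinarith [mul_pos (laguerreWeight_succ_pos hα k) hp]

lemma threeTermRec_step (hα : -1 < α) {k : ℕ}
    (hrec : (k + 2 : ℝ) * p (k + 2) = c k * p (k + 1) - (k + 1 + α) * p k)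
    (hc : laguerreWeight α (k + 1) + laguerreWeight α (k + 2) ≤ c k)
    (hp : 0 < p k) (hk : laguerreWeight α (k + 1) * p k ≤ (k + 1) * p (k + 1)) :
    0 < p (k + 1) ∧ laguerreWeight α (k + 2) * p (k + 1) ≤ (k + 2) * p (k + 2) := by
  have hp' := pos_succ_of_laguerreWeight_mul_le hα hp hk
  refine ⟨hp', ?_⟩
  have hk' : (k + 1 + α) * p k ≤ laguerreWeight α (k + 1) * p (k + 1) := by
    have hsq := laguerreWeight_sq hα (k + 1)
    push_cast at hsq
    refine le_of_mul_le_mul_left ?_ (by positivity : (0 : ℝ) < k + 1)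
    linear_combination mul_le_mul_of_nonneg_left hk (laguerreWeight_succ_pos hα k).le - p k * hsq
  nlinarith [mul_le_mul_of_nonneg_right hc hp'.le]

theorem pos_of_threeTermRec (hα : -1 < α)
    (hrec : ∀ k, k + 2 ≤ n → (k + 2 : ℝ) * p (k + 2) = c k * p (k + 1) - (k + 1 + α) * p k)
    (hc : ∀ k, k + 2 ≤ n → laguerreWeight α (k + 1) + laguerreWeight α (k + 2) ≤ c k)
    (h₀ : 0 < p 0) (h₁ : laguerreWeight α 1 * p 0 ≤ p 1) : 0 < p n := by
  have key : ∀ j, j + 1 ≤ n →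
      0 < p j ∧ laguerreWeight α (j + 1) * p j ≤ (j + 1) * p (j + 1) := by
    intro j
    induction j with
    | zero => exact fun _ => by simpa [h₀] using h₁
    | succ j ih =>
      intro hj
      obtain ⟨hp, hle⟩ := ih (by omega)
      obtain ⟨hp', hle'⟩ := threeTermRec_step hα (hrec j hj) (hc j hj) hp hle
      exact ⟨hp', by push_cast; linarith⟩
  rcases n with _ | n
  · exact h₀
  · obtain ⟨hp, hle⟩ := key n le_rfl
    exact pos_succ_of_laguerreWeight_mul_le hα hp hle

end ThreeTermRecurrence

noncomputable def laguerreZeroBound (n : ℕ) (α : ℝ) : ℝ :=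
  2 * n + α - 1 + laguerreWeight α (n - 1) + laguerreWeight α n

theorem neg_one_pow_mul_laguerre_pos {n : ℕ} {α x : ℝ} (hα : -1 < α) (hn : 1 ≤ n)
    (hx : laguerreZeroBound n α ≤ x) : 0 < (-1) ^ n * laguerre n α x := by
  have hn' : (1 : ℝ) ≤ n := by exact_mod_cast hn
  have hw : 0 ≤ laguerreWeight α (n - 1) := Real.sqrt_nonneg _
  unfold laguerreZeroBound at hx
  refine pos_of_threeTermRec (p := fun j => (-1) ^ j * laguerre j α x)
    (c := fun k => x - (2 * k + α + 3)) hα (fun k _ => ?_) (fun k hk => ?_)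
    (by simp [laguerre_zero]) ?_
  · linear_combination (-1) ^ k * laguerre_add_two k α x
  · have h₁ := laguerreWeight_monotone hα (show k + 1 ≤ n - 1 by omega)
    have h₂ := laguerreWeight_monotone hα (show k + 2 ≤ n by omega)
    have : (k : ℝ) + 2 ≤ n := by exact_mod_cast hk
    linarith
  · have := laguerreWeight_monotone hα hn
    simp only [pow_zero, laguerre_zero, pow_one, laguerre_one]
    linarith

theorem laguerre_pos_of_le {n : ℕ} {α x : ℝ} (hα : -1 < α) (hn : 1 ≤ n)
    (hx : x ≤ laguerreZeroBound n α - 4 * Real.sqrt (n * (n + α + 1))) :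
    0 < laguerre n α x := by
  have hS {k : ℕ} (hk : k ≤ n) := sub_add_laguerreWeight_le hα hk
  have hₙ := hS le_rfl
  have hₙ₁ := hS (Nat.sub_le n 1)
  rw [Nat.cast_sub hn] at hₙ₁
  unfold laguerreZeroBound at hx
  refine pos_of_threeTermRec (p := fun j => laguerre j α x)
    (c := fun k => 2 * k + α + 3 - x) hα (fun k _ => laguerre_add_two k α x) (fun k hk => ?_)
    (by simp [laguerre_zero]) ?_
  · have h₁ := hS (show k + 1 ≤ n by omega)
    have h₂ := hS (show k + 2 ≤ n by omega)
    push_cast at h₁ h₂ hₙ₁ ⊢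
    linarith
  · have h₀ : (n : ℝ) ≤ Real.sqrt (n * (n + α + 1)) := by
      simpa [laguerreWeight] using hS (Nat.zero_le n)
    have h₁ := hS hn
    push_cast at h₁ hₙ₁
    simp only [laguerre_zero, laguerre_one]
    linarith

theorem laguerre_zeros_range_general (n : ℕ) (hn : 1 ≤ n) (α : ℝ) (hα : -1 < α)
    (x : ℕ → ℝ)
    (hzero : ∀ i ∈ Finset.Icc 1 n, laguerre n α (x i) = 0) :
    x 1 - x n < 4 * Real.sqrt (n * (n + α + 1)) := by
  have h₁ : x 1 < laguerreZeroBound n α := by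
    by_contra! h
    simpa [hzero 1 (mem_Icc.mpr ⟨le_rfl, hn⟩)] using neg_one_pow_mul_laguerre_pos hα hn h
  have hₙ : laguerreZeroBound n α - 4 * Real.sqrt (n * (n + α + 1)) < x n := by
    by_contra! h
    simpa [hzero n (mem_Icc.mpr ⟨hn, le_rfl⟩)] using laguerre_pos_of_le hα hn h
  linarith

/-- Let `α > −1`, `n ≥ 1`, and let `x_{n,1}(α)` and `x_{n,n}(α)` denote respectively the
largest and smallest zero of `L_n^{(α)}` (here `x k = x_{n,k}(α)`, listed in decreasing
order).  Then `x_{n,1}(α) − x_{n,n}(α) < 4√(n(n + α + 1))`. -/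
theorem laguerre_zeros_range (n : ℕ) (hn : 1 ≤ n) (α : ℝ) (hα : -1 < α)
    (x : ℕ → ℝ)
    (hzero : ∀ i ∈ Finset.Icc 1 n, laguerre n α (x i) = 0)
    (hanti : ∀ i ∈ Finset.Icc 1 n, ∀ j ∈ Finset.Icc 1 n, i < j → x j < x i)
    (hall : ∀ y : ℝ, laguerre n α y = 0 → ∃ i ∈ Finset.Icc 1 n, y = x i) :
    x 1 - x n < 4 * Real.sqrt (n * (n + α + 1)) :=
  laguerre_zeros_range_general n hn α hα x hzero
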